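/- Every point of the projected layer j (j > i) is 2D-dominated by some point of the projected layer i: if q ∈ S belongs to layer j of the 3D maxima layers and q.z > v, then there exists p ∈ S in layer i with p.z > v whose projection (p.x, p.y) dominates (q.x, q.y), for any 1 ≤ i < j. -/

import Mathlib

/-!
A point `q` of layer `j > i` survived the removal of layer `i`, so it is not maximal in the
`i`-th residual set: some point of that set dominates it. Among its dominators, one with
largest first coordinate is itself maximal, i.e. lies in layer `i`, and strict 3D dominance
implies both the `z`-bound and the 2D dominance of the projections.
-/

open scoped Classical

/-- 3D dominance: strict coordinatewise. `domS p q` means `p` dominates `q`. -/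
def domS (p q : ℝ × ℝ × ℝ) : Prop := q.1 < p.1 ∧ q.2.1 < p.2.1 ∧ q.2.2 < p.2.2

noncomputable def maximaS (S : Finset (ℝ × ℝ × ℝ)) : Finset (ℝ × ℝ × ℝ) :=
  S.filter fun p => ¬ ∃ q ∈ S, domS q p

noncomputable def residualS (S : Finset (ℝ × ℝ × ℝ)) : ℕ → Finset (ℝ × ℝ × ℝ)
  | 0 => S
  | i + 1 => residualS S i \ maximaS (residualS S i)

noncomputable def layerS (S : Finset (ℝ × ℝ × ℝ)) (i : ℕ) : Finset (ℝ × ℝ × ℝ) :=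
  maximaS (residualS S i)

lemma domS_trans {a b c : ℝ × ℝ × ℝ} (hab : domS a b) (hbc : domS b c) : domS a c :=
  ⟨hbc.1.trans hab.1, hbc.2.1.trans hab.2.1, hbc.2.2.trans hab.2.2⟩

lemma exists_mem_maximaS_domS {T : Finset (ℝ × ℝ × ℝ)} {q : ℝ × ℝ × ℝ}
    (h : ∃ r ∈ T, domS r q) : ∃ p ∈ maximaS T, domS p q := by
  obtain ⟨r, hrT, hrq⟩ := h
  have hne : (T.filter (domS · q)).Nonempty := ⟨r, Finset.mem_filter.2 ⟨hrT, hrq⟩⟩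
  obtain ⟨p, hp, hpmax⟩ := (T.filter (domS · q)).exists_max_image (·.1) hne
  obtain ⟨hpT, hpq⟩ := Finset.mem_filter.1 hp
  refine ⟨p, Finset.mem_filter.2 ⟨hpT, ?_⟩, hpq⟩
  rintro ⟨s, hsT, hsp⟩
  exact (hpmax s (Finset.mem_filter.2 ⟨hsT, domS_trans hsp hpq⟩)).not_gt hsp.1

lemma residualS_antitone (S : Finset (ℝ × ℝ × ℝ)) : Antitone (residualS S) :=
  antitone_nat_of_succ_le fun _ => Finset.sdiff_subset

lemma layerS_subset_residualS (S : Finset (ℝ × ℝ × ℝ)) (i : ℕ) :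
    layerS S i ⊆ residualS S i :=
  Finset.filter_subset _ _

lemma exists_domS_of_mem_residualS_succ {S : Finset (ℝ × ℝ × ℝ)} {i : ℕ}
    {q : ℝ × ℝ × ℝ} (hq : q ∈ residualS S (i + 1)) : ∃ r ∈ residualS S i, domS r q := by
  obtain ⟨hqi, hq_not_max⟩ := Finset.mem_sdiff.1 hq
  by_contra h
  exact hq_not_max (Finset.mem_filter.2 ⟨hqi, h⟩)

lemma exists_mem_layerS_domS {S : Finset (ℝ × ℝ × ℝ)} {i j : ℕ} (hij : i < j)
    {q : ℝ × ℝ × ℝ} (hq : q ∈ layerS S j) : ∃ p ∈ layerS S i, domS p q :=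
  exists_mem_maximaS_domS <| exists_domS_of_mem_residualS_succ <|
    residualS_antitone S hij (layerS_subset_residualS S j hq)

theorem stmt11_general (S : Finset (ℝ × ℝ × ℝ))
    (v : ℝ) (i j : ℕ) (hij : i < j)
    (q : ℝ × ℝ × ℝ) (hq : q ∈ layerS S j) (hqz : v < q.2.2) :
    ∃ p ∈ layerS S i, v < p.2.2 ∧ q.1 ≤ p.1 ∧ q.2.1 ≤ p.2.1 := by
  obtain ⟨p, hp, hpx, hpy, hpz⟩ := exists_mem_layerS_domS hij hq
  exact ⟨p, hp, hqz.trans hpz, hpx.le, hpy.le⟩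

/-- Every point of the projected layer `j` (`j > i`) with z-coordinate `> v` is
2D-dominated by the projection of some layer-`i` point with z-coordinate `> v`. -/
theorem stmt11 (S : Finset (ℝ × ℝ × ℝ))
    (hx : ∀ a ∈ S, ∀ b ∈ S, a.1 = b.1 → a = b)
    (hy : ∀ a ∈ S, ∀ b ∈ S, a.2.1 = b.2.1 → a = b)
    (hz : ∀ a ∈ S, ∀ b ∈ S, a.2.2 = b.2.2 → a = b)
    (v : ℝ) (i j : ℕ) (hij : i < j)
    (q : ℝ × ℝ × ℝ) (hq : q ∈ layerS S j) (hqz : v < q.2.2) :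
    ∃ p ∈ layerS S i, v < p.2.2 ∧ q.1 ≤ p.1 ∧ q.2.1 ≤ p.2.1 :=
  stmt11_general S v i j hij q hq hqz
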